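/- arXiv:2402.14487 — 2 statements merged into one kernel-verified Lean document; each statement's English description precedes it below -/
import Mathlib

section
/- Let p ≥ 2 be a real number. For all real numbers x and y, |Φ_p(x) + Φ_p(y)| ≥ 2^{2−p} |x + y|^{p−1}. -/
/-!
Since `Φ_p` is odd we may assume `x + y ≥ 0`, and by symmetry `y ≤ x`, so `x ≥ 0`, where
`Φ_p(x) = x^(p-1)`. If also `y ≥ 0`, the claim is the power-mean inequality
`(x + y)^(p-1) ≤ 2^(p-2) (x^(p-1) + y^(p-1))`. If `y < 0`, superadditivity of `t ↦ t^(p-1)`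
gives `Φ_p(x) + Φ_p(y) = x^(p-1) - |y|^(p-1) ≥ (x + y)^(p-1)`, and `2^(2-p) ≤ 1`.
-/

/-- The p-Laplacian type function `Φ_p(w) = |w|^(p-2) * w` (real exponent `p`). -/
noncomputable def Phi (p w : ℝ) : ℝ := |w| ^ (p - 2) * w

namespace Real

lemma rpow_add_le_mul_rpow_add_rpow {p a b : ℝ} (ha : 0 ≤ a) (hb : 0 ≤ b) (hp : 1 ≤ p) :
    (a + b) ^ p ≤ 2 ^ (p - 1) * (a ^ p + b ^ p) := by
  lift a to NNReal using ha
  lift b to NNReal using hb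
  exact_mod_cast NNReal.rpow_add_le_mul_rpow_add_rpow a b hp

lemma rpow_sub_le_rpow_sub_rpow {p a b : ℝ} (hb : 0 ≤ b) (hba : b ≤ a) (hp : 1 ≤ p) :
    (a - b) ^ p ≤ a ^ p - b ^ p := by
  have := add_rpow_le_rpow_add (sub_nonneg.2 hba) hb hp
  rw [sub_add_cancel] at this
  linarith

end Real

lemma Phi_neg (p w : ℝ) : Phi p (-w) = -Phi p w := by
  simp only [Phi, abs_neg, mul_neg]

lemma Phi_of_nonneg {p w : ℝ} (hp : p ≠ 1) (hw : 0 ≤ w) : Phi p w = w ^ (p - 1) := by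
  rcases hw.eq_or_lt with rfl | hw
  · simp [Phi, Real.zero_rpow (sub_ne_zero.2 hp)]
  · rw [Phi, abs_of_pos hw, ← Real.rpow_add_one hw.ne']
    ring_nf

lemma two_rpow_mul_le_Phi_add_Phi {p x y : ℝ} (hp : 2 ≤ p) (hxy : 0 ≤ x + y) :
    (2 : ℝ) ^ (2 - p) * (x + y) ^ (p - 1) ≤ Phi p x + Phi p y := by
  wlog hyx : y ≤ x generalizing x y
  · simpa only [add_comm] using this (by rwa [add_comm]) (le_of_not_ge hyx)
  have hq : 1 ≤ p - 1 := by linarith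
  have hx : 0 ≤ x := by linarith
  rw [Phi_of_nonneg (by linarith) hx]
  rcases le_or_gt 0 y with hy | hy
  · rw [Phi_of_nonneg (by linarith) hy]
    have hmean := Real.rpow_add_le_mul_rpow_add_rpow hx hy hq
    rw [sub_sub, one_add_one_eq_two] at hmean
    calc (2 : ℝ) ^ (2 - p) * (x + y) ^ (p - 1)
        ≤ 2 ^ (2 - p) * (2 ^ (p - 2) * (x ^ (p - 1) + y ^ (p - 1))) := by gcongr
      _ = x ^ (p - 1) + y ^ (p - 1) := by
          rw [← mul_assoc, ← Real.rpow_add two_pos, sub_add_sub_cancel, sub_self, Real.rpow_zero,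
            one_mul]
  · have hPhi_y : Phi p y = -(-y) ^ (p - 1) := by
      rw [← neg_neg y, Phi_neg, neg_neg, Phi_of_nonneg (by linarith) (by linarith)]
    have htwo : (2 : ℝ) ^ (2 - p) ≤ 1 :=
      Real.rpow_le_one_of_one_le_of_nonpos one_le_two (by linarith)
    calc (2 : ℝ) ^ (2 - p) * (x + y) ^ (p - 1)
        ≤ (x - -y) ^ (p - 1) := by
          rw [sub_neg_eq_add]
          exact mul_le_of_le_one_left (Real.rpow_nonneg hxy _) htwo
      _ ≤ x ^ (p - 1) - (-y) ^ (p - 1) :=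
          Real.rpow_sub_le_rpow_sub_rpow (by linarith) (by linarith) hq
      _ = x ^ (p - 1) + Phi p y := by rw [hPhi_y, sub_eq_add_neg]

theorem stmt2 (p : ℝ) (hp : 2 ≤ p) (x y : ℝ) :
    (2 : ℝ) ^ (2 - p) * |x + y| ^ (p - 1) ≤ |Phi p x + Phi p y| := by
  rcases le_total 0 (x + y) with hxy | hxy
  · rw [abs_of_nonneg hxy]
    exact (two_rpow_mul_le_Phi_add_Phi hp hxy).trans (le_abs_self _)
  · have h := two_rpow_mul_le_Phi_add_Phi hp (x := -x) (y := -y) (by linarith)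
    rw [Phi_neg, Phi_neg, ← neg_add, ← neg_add, ← abs_of_nonpos hxy] at h
    exact h.trans (neg_le_abs _)
end

section
/- Let α ∈ (0,1), γ > 0 and fix t ∈ ℝ. Then for every s < t, the function s ↦ E_α(−γ(t−s)^α) is differentiable at s and its derivative equals γ (t−s)^{α−1} E_{α,α}(−γ(t−s)^α). -/
/-- The two-parameter Mittag-Leffler function `E_{α,β}(x) = ∑ₖ xᵏ / Γ(αk + β)`. -/
noncomputable def mittagLeffler (α β x : ℝ) : ℝ :=
  ∑' k : ℕ, x ^ k / Real.Gamma (α * k + β)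

open Real Filter Set

lemma gamma_step {α x : ℝ} (hα : α ∈ Set.Ioo (0:ℝ) 1) (hx : 0 < x) :
    x * Real.Gamma x ≤ Real.Gamma (x + α) * (x + α) ^ (1 - α) := by
  obtain ⟨hα0, hα1⟩ := hα
  have hxα : 0 < x + α := by linarith
  have h := Real.convexOn_log_Gamma.2 (show x + α ∈ Set.Ioi (0:ℝ) from hxα)
      (show x + α + 1 ∈ Set.Ioi (0:ℝ) by simp only [Set.mem_Ioi]; linarith)
      hα0.le (by linarith : (0:ℝ) ≤ 1 - α) (show α + (1 - α) = 1 by ring)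
  simp only [smul_eq_mul, Function.comp] at h
  have hpt : α * (x + α) + (1 - α) * (x + α + 1) = x + 1 := by ring
  rw [hpt, Real.Gamma_add_one hx.ne', Real.Gamma_add_one hxα.ne'] at h
  have hΓx : 0 < Real.Gamma x := Real.Gamma_pos_of_pos hx
  have hΓxα : 0 < Real.Gamma (x + α) := Real.Gamma_pos_of_pos hxα
  rw [Real.log_mul hx.ne' hΓx.ne', Real.log_mul hxα.ne' hΓxα.ne'] at h
  have key : Real.log (x * Real.Gamma x) ≤
      Real.log (Real.Gamma (x + α) * (x + α) ^ (1 - α)) := by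
    rw [Real.log_mul hx.ne' hΓx.ne', Real.log_mul hΓxα.ne' (by positivity),
      Real.log_rpow hxα]
    linarith
  exact (Real.log_le_log_iff (by positivity) (by positivity)).mp key

lemma ml_summable {α β : ℝ} (hα : α ∈ Set.Ioo (0:ℝ) 1) (hβ : 0 < β) (x : ℝ) :
    Summable (fun k : ℕ => x ^ k / Real.Gamma (α * k + β)) := by
  obtain ⟨hα0, hα1⟩ := hα
  refine summable_of_ratio_norm_eventually_le (r := 1/2) (by norm_num) ?_
  have htend : Tendsto (fun k : ℕ => (α * k + β + α) ^ α) atTop atTop := by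
    apply (tendsto_rpow_atTop hα0).comp
    apply tendsto_atTop_add_const_right
    apply tendsto_atTop_add_const_right
    exact (tendsto_natCast_atTop_atTop (R := ℝ)).const_mul_atTop hα0
  filter_upwards [htend.eventually_ge_atTop (4 * (|x| + 1)), eventually_ge_atTop 1]
    with k hk hk1
  set X : ℝ := α * k + β with hX
  have hXpos : 0 < X := by positivity
  have hXα : 0 < X + α := by positivity
  have hΓX : 0 < Real.Gamma X := Real.Gamma_pos_of_pos hXpos
  have hΓXα : 0 < Real.Gamma (X + α) := Real.Gamma_pos_of_pos hXα
  have hXge : α ≤ X := by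
    have : (1:ℝ) ≤ (k:ℝ) := by exact_mod_cast hk1
    nlinarith
  have hstep := gamma_step ⟨hα0, hα1⟩ hXpos
  rw [Real.rpow_sub hXα, Real.rpow_one] at hstep
  have hpow : 0 < (X + α) ^ α := by positivity
  have key : 2 * |x| * Real.Gamma X ≤ Real.Gamma (X + α) := by
    have h1 : X * Real.Gamma X * (X + α) ^ α ≤ Real.Gamma (X + α) * (X + α) := by
      have := mul_le_mul_of_nonneg_right hstep hpow.le
      calc X * Real.Gamma X * (X + α) ^ α
          ≤ Real.Gamma (X + α) * ((X + α) / (X + α) ^ α) * (X + α) ^ α := this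
        _ = Real.Gamma (X + α) * (X + α) := by field_simp
    have h2 : 4 * (|x| + 1) ≤ (X + α) ^ α := hk
    have h3 : (X + α) / 2 ≤ X := by linarith
    have h4 : 2 * (|x| + 1) * Real.Gamma X * (X + α) ≤ Real.Gamma (X + α) * (X + α) :=
      calc 2 * (|x| + 1) * Real.Gamma X * (X + α)
          = (X + α) / 2 * Real.Gamma X * (4 * (|x| + 1)) := by ring
        _ ≤ (X + α) / 2 * Real.Gamma X * ((X + α) ^ α) := by
            exact mul_le_mul_of_nonneg_left h2 (by positivity)
        _ ≤ X * Real.Gamma X * (X + α) ^ α := by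
            exact mul_le_mul_of_nonneg_right
              (mul_le_mul_of_nonneg_right h3 hΓX.le) hpow.le
        _ ≤ Real.Gamma (X + α) * (X + α) := h1
    have h5 : 2 * |x| * Real.Gamma X * (X + α) ≤ Real.Gamma (X + α) * (X + α) := by
      nlinarith [mul_pos hΓX hXα]
    exact le_of_mul_le_mul_right (by linarith [h5]) hXα
  -- ratio bound
  rw [show α * ((k + 1 : ℕ) : ℝ) + β = X + α by push_cast; ring]
  rw [Real.norm_eq_abs, Real.norm_eq_abs, abs_div, abs_div, abs_pow, abs_pow,
    abs_of_pos hΓXα, abs_of_pos hΓX]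
  rw [show (1:ℝ)/2 * (|x| ^ k / Real.Gamma X) = |x| ^ k / (2 * Real.Gamma X) by ring,
    div_le_div_iff₀ hΓXα (by positivity)]
  calc |x| ^ (k + 1) * (2 * Real.Gamma X) = |x| ^ k * (2 * |x| * Real.Gamma X) := by ring
    _ ≤ |x| ^ k * Real.Gamma (X + α) :=
        mul_le_mul_of_nonneg_left key (pow_nonneg (abs_nonneg x) k)

theorem stmt4 (α γ t : ℝ) (hα : α ∈ Set.Ioo (0 : ℝ) 1) (hγ : 0 < γ)
    (s : ℝ) (hs : s < t) :
    HasDerivAt (fun s' : ℝ => mittagLeffler α 1 (-γ * (t - s') ^ α))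
      (γ * (t - s) ^ (α - 1) * mittagLeffler α α (-γ * (t - s) ^ α)) s := by
  obtain ⟨hα0, hα1⟩ := hα
  have hr : 0 < t - s := by linarith
  set r : ℝ := t - s with hr_def
  set U : Set ℝ := Set.Ioo (t - 2*r) (t - r/2) with hU
  have hsU : s ∈ U := by
    simp only [hU, Set.mem_Ioo]
    constructor <;> [linarith; linarith]
  set g : ℕ → ℝ → ℝ :=
    fun k s' => (-γ * (t - s') ^ α) ^ k / Real.Gamma (α * k + 1) with hg
  set G : ℕ → ℝ → ℝ :=
    fun k s' => (k : ℝ) * (-γ * (t - s') ^ α) ^ (k - 1) * (γ * α * (t - s') ^ (α - 1)) /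
      Real.Gamma (α * k + 1) with hG
  set u : ℕ → ℝ :=
    fun k => 2 * α / r * ((2 * γ * (2 * r) ^ α) ^ k / Real.Gamma (α * k + 1)) with hu_def
  have hu : Summable u := (ml_summable ⟨hα0, hα1⟩ one_pos (2*γ*(2*r)^α)).mul_left _
  have hderiv : ∀ k s', s' ∈ U → HasDerivAt (g k) (G k s') s' := by
    intro k s' hs'
    simp only [hU, Set.mem_Ioo] at hs'
    have hw : 0 < t - s' := by linarith [hs'.2, hr]
    have h1 : HasDerivAt (fun y : ℝ => t - y) (-1) s' := by
      simpa using (hasDerivAt_id s').const_sub t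
    have h2 : HasDerivAt (fun y : ℝ => (t - y) ^ α)
        (α * (t - s') ^ (α - 1) * (-1)) s' :=
      (Real.hasDerivAt_rpow_const (Or.inl hw.ne')).comp s' h1
    have h3 : HasDerivAt (fun y : ℝ => -γ * (t - y) ^ α)
        (-γ * (α * (t - s') ^ (α - 1) * (-1))) s' := h2.const_mul (-γ)
    have h4 := ((hasDerivAt_pow k (-γ * (t - s') ^ α)).comp s' h3).div_const
      (Real.Gamma (α * k + 1))
    refine h4.congr_deriv ?_
    simp only [hG]
    ring
  have hbound : ∀ k s', s' ∈ U → ‖G k s'‖ ≤ u k := by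
    intro k s' hs'
    simp only [hU, Set.mem_Ioo] at hs'
    have hw : 0 < t - s' := by linarith [hs'.2, hr]
    have hwu : t - s' ≤ 2 * r := by linarith [hs'.1]
    have hwl : r / 2 ≤ t - s' := by linarith [hs'.2]
    have hΓ : ∀ j : ℕ, 0 < Real.Gamma (α * j + 1) :=
      fun j => Real.Gamma_pos_of_pos (by positivity)
    rcases k with _ | m
    · have h0 : G 0 s' = 0 := by simp [hG]
      rw [h0, norm_zero, hu_def]
      have := hΓ 0
      positivity
    · simp only [hG, hu_def, Nat.add_sub_cancel]
      rw [Real.norm_eq_abs, abs_div, abs_of_pos (hΓ (m+1)),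
        show 2*α/r * ((2*γ*(2*r)^α)^(m+1) / Real.Gamma (α*((m+1:ℕ):ℝ)+1)) =
          (2*α/r * (2*γ*(2*r)^α)^(m+1)) / Real.Gamma (α*((m+1:ℕ):ℝ)+1) by ring]
      apply div_le_div_of_nonneg_right ?_ (hΓ (m+1)).le
      have hwa : 0 < (t - s') ^ α := Real.rpow_pos_of_pos hw α
      have habs : |(-γ * (t - s') ^ α)| = γ * (t - s') ^ α := by
        rw [abs_mul, abs_neg, abs_of_pos hγ, abs_of_pos hwa]
      have e1 : (t - s') ^ α ≤ (2 * r) ^ α := Real.rpow_le_rpow hw.le hwu hα0.le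
      have e2 : (t - s') ^ (α - 1) ≤ (2 * r) ^ α * (2 / r) := by
        rw [Real.rpow_sub hw, Real.rpow_one]
        calc (t - s') ^ α / (t - s') ≤ (2 * r) ^ α / (r / 2) :=
              div_le_div₀ (by positivity) e1 (by linarith) hwl
          _ = (2 * r) ^ α * (2 / r) := by rw [div_div_eq_mul_div, mul_div_assoc]
      have e3 : ((m + 1 : ℕ) : ℝ) ≤ 2 ^ (m + 1) := by
        exact_mod_cast (Nat.lt_two_pow_self (n := m + 1)).le
      rw [abs_mul, abs_mul, abs_pow, habs,
        abs_of_pos (show 0 < γ * α * (t - s') ^ (α - 1) by positivity),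
        abs_of_nonneg (show (0:ℝ) ≤ ((m + 1 : ℕ) : ℝ) by positivity)]
      calc ((m + 1 : ℕ) : ℝ) * (γ * (t - s') ^ α) ^ m * (γ * α * (t - s') ^ (α - 1))
          ≤ (2:ℝ) ^ (m + 1) * (γ * (2 * r) ^ α) ^ m * (γ * α * ((2 * r) ^ α * (2 / r))) := by
            gcongr
        _ = 2 * α / r * (2 * γ * (2 * r) ^ α) ^ (m + 1) := by ring
  have hg0 : Summable (fun k => g k s) := ml_summable ⟨hα0, hα1⟩ one_pos _
  have H := hasDerivAt_tsum_of_isPreconnected hu isOpen_Ioo isPreconnected_Ioo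
    hderiv hbound hsU hg0 hsU
  have hsum' : Summable (fun k => G k s) :=
    Summable.of_norm_bounded hu fun k => hbound k s hsU
  have hval : ∑' n, G n s =
      γ * (t - s) ^ (α - 1) * mittagLeffler α α (-γ * (t - s) ^ α) := by
    rw [hsum'.tsum_eq_zero_add]
    have h0 : G 0 s = 0 := by simp [hG]
    rw [h0, zero_add]
    have hterm : ∀ n : ℕ, G (n+1) s =
        γ * (t - s) ^ (α - 1) * ((-γ * (t - s) ^ α) ^ n / Real.Gamma (α * n + α)) := by
      intro n
      have hΓpos : 0 < Real.Gamma (α * n + α) := Real.Gamma_pos_of_pos (by positivity)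
      have hrec : Real.Gamma (α * ((n+1 : ℕ) : ℝ) + 1) =
          (α * n + α) * Real.Gamma (α * n + α) := by
        rw [show (α * ((n+1:ℕ):ℝ) + 1) = (α * n + α) + 1 by push_cast; ring]
        exact Real.Gamma_add_one (by positivity)
      simp only [hG, Nat.add_sub_cancel, hrec]
      push_cast
      have hα' : α * n + α ≠ 0 := by positivity
      field_simp
    rw [tsum_congr hterm, tsum_mul_left]
    rfl
  rw [show (fun s' : ℝ => mittagLeffler α 1 (-γ * (t - s') ^ α)) =
    fun z => ∑' n, g n z from rfl, ← hval]
  exact H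
end
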